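/- arXiv:2404.16320 — 2 statements merged into one kernel-verified Lean document; each statement's English description precedes it below -/
import Mathlib

section
/- Let Γ: (0,∞) × R^d × R^d → R satisfy the Gaussian bound |Γ(t;x,y)| ≤ K t^{-d/2} exp(-c|x-y|²/t) for all t > 0, x, y ∈ R^d, and suppose Γ is Z^d-periodic in its second argument in the sense that defining Q(t;x,y) = Σ_{k ∈ Z^d} Γ(t; x, y + k) for x, y ∈ [0,1)^d with x - y ∈ [-1/2,1/2]^d, the sum converges absolutely. Then |Q(t;x,y)| ≤ C K (t^{-d/2} + 1) exp(-c|x-y|²/t), with C depending only on c and d. -/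
/-!
Write `z = x - y`. Since `|zᵢ| ≤ 1/2`, every integer `m` satisfies
`(zᵢ - m)² ≥ zᵢ² + m² - |m|`, so the term of index `k` of the lattice sum is at most
`K t^{-d/2} exp(-c|z|²/t) ∏ᵢ w(kᵢ)` with `w(m) = exp(-(c/t)(m² - |m|))`. The lattice sum of the
product factorises as `(∑ₘ w(m))^d`, and comparing `w` with a geometric series of ratio
`exp(-2√(c/t))` gives `∑ₘ w(m) = O(1 + √t)`. Finally `t^{-d/2} (1 + √t)^d ≤ 2^d (t^{-d/2} + 1)`.
-/

open Real

lemma sq_add_sq_sub_abs_le_sq_sub {z : ℝ} (hz : |z| ≤ 1 / 2) (k : ℝ) :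
    z ^ 2 + (k ^ 2 - |k|) ≤ (z - k) ^ 2 := by
  have : z * k ≤ |k| / 2 :=
    calc z * k ≤ |z| * |k| := by rw [← abs_mul]; exact le_abs_self _
      _ ≤ |k| / 2 := by nlinarith [abs_nonneg k]
  nlinarith

lemma inv_one_sub_exp_neg_le {u : ℝ} (hu : 0 < u) : (1 - exp (-u))⁻¹ ≤ 1 + u⁻¹ := by
  have hexp : u + 1 ≤ exp u := add_one_le_exp u
  have hpos : 0 < exp u - 1 := by linarith
  calc (1 - exp (-u))⁻¹ = 1 + (exp u - 1)⁻¹ := by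
        rw [exp_neg]; field_simp; ring
    _ ≤ 1 + u⁻¹ := by gcongr; linarith

noncomputable def latticeWeight (a : ℝ) (m : ℤ) : ℝ := exp (-a * ((m : ℝ) ^ 2 - |(m : ℝ)|))

section LatticeWeight

variable {a : ℝ}

lemma latticeWeight_nonneg (a : ℝ) (m : ℤ) : 0 ≤ latticeWeight a m := (exp_pos _).le

lemma latticeWeight_zero (a : ℝ) : latticeWeight a 0 = 1 := by simp [latticeWeight]

lemma latticeWeight_neg (a : ℝ) (m : ℤ) : latticeWeight a (-m) = latticeWeight a m := by
  simp [latticeWeight]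

-- `a n² + 1 ≥ 2 √a n` (AM-GM) turns the Gaussian into a geometric sequence.
lemma latticeWeight_natCast_add_one_le (ha : 0 ≤ a) (n : ℕ) :
    latticeWeight a (n + 1) ≤ exp 1 * exp (-(2 * √a)) ^ n := by
  rw [latticeWeight, ← exp_nat_mul, ← exp_add]
  refine exp_le_exp.2 ?_
  have hsq : √a * √a = a := mul_self_sqrt ha
  have hn : (0 : ℝ) ≤ n := n.cast_nonneg
  push_cast
  rw [abs_of_nonneg (by positivity)]
  nlinarith [sq_nonneg (√a * n - 1), mul_nonneg ha hn]

lemma summable_latticeWeight_natCast_add_one (ha : 0 < a) :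
    Summable fun n : ℕ => latticeWeight a (n + 1) :=
  .of_nonneg_of_le (fun _ => latticeWeight_nonneg _ _) (latticeWeight_natCast_add_one_le ha.le)
    ((summable_geometric_of_lt_one (exp_pos _).le
      (exp_lt_one_iff.2 (neg_lt_zero.2 (by positivity)))).mul_left _)

lemma tsum_latticeWeight_natCast_add_one_le (ha : 0 < a) :
    ∑' n : ℕ, latticeWeight a (n + 1) ≤ exp 1 * (1 + (2 * √a)⁻¹) := by
  have hr : exp (-(2 * √a)) < 1 := exp_lt_one_iff.2 (neg_lt_zero.2 (by positivity))
  have hgeom := summable_geometric_of_lt_one (exp_pos _).le hr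
  calc ∑' n : ℕ, latticeWeight a (n + 1) ≤ ∑' n : ℕ, exp 1 * exp (-(2 * √a)) ^ n :=
        (summable_latticeWeight_natCast_add_one ha).tsum_le_tsum
          (latticeWeight_natCast_add_one_le ha.le) (hgeom.mul_left _)
    _ = exp 1 * (1 - exp (-(2 * √a)))⁻¹ := by
        rw [tsum_mul_left, tsum_geometric_of_lt_one (exp_pos _).le hr]
    _ ≤ exp 1 * (1 + (2 * √a)⁻¹) := by
        gcongr; exact inv_one_sub_exp_neg_le (by positivity)

lemma summable_latticeWeight (ha : 0 < a) : Summable (latticeWeight a) :=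
  .of_add_one_of_neg_add_one (summable_latticeWeight_natCast_add_one ha)
    (by simpa only [latticeWeight_neg] using summable_latticeWeight_natCast_add_one ha)

lemma tsum_latticeWeight_le (ha : 0 < a) :
    ∑' m, latticeWeight a m ≤ 1 + 2 * exp 1 + exp 1 / √a := by
  have hsplit := tsum_of_add_one_of_neg_add_one (summable_latticeWeight_natCast_add_one ha)
    (by simpa only [latticeWeight_neg] using summable_latticeWeight_natCast_add_one ha)
  simp only [latticeWeight_neg, latticeWeight_zero] at hsplit
  have hhalf := tsum_latticeWeight_natCast_add_one_le ha
  have hsa : 0 < √a := sqrt_pos.2 ha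
  rw [hsplit]
  calc _ ≤ exp 1 * (1 + (2 * √a)⁻¹) + 1 + exp 1 * (1 + (2 * √a)⁻¹) := by gcongr
    _ = _ := by field_simp; ring

lemma tsum_latticeWeight_div_le {c t : ℝ} (hc : 0 < c) (ht : 0 < t) :
    ∑' m, latticeWeight (c / t) m ≤ (1 + 2 * exp 1 + exp 1 / √c) * (1 + √t) :=
  calc ∑' m, latticeWeight (c / t) m ≤ 1 + 2 * exp 1 + exp 1 / √(c / t) :=
        tsum_latticeWeight_le (div_pos hc ht)
    _ = 1 + 2 * exp 1 + exp 1 / √c * √t := by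
        rw [sqrt_div hc.le, div_div_eq_mul_div, mul_div_right_comm]
    _ ≤ (1 + 2 * exp 1 + exp 1 / √c) * (1 + √t) := by
        have : 0 ≤ exp 1 / √c := by positivity
        nlinarith [mul_nonneg (by positivity : (0 : ℝ) ≤ 1 + 2 * exp 1) (sqrt_nonneg t)]

end LatticeWeight

lemma hasSum_fin_pi_prod {β : Type*} {f : β → ℝ} {s : ℝ} (hf : HasSum f s) (hf0 : 0 ≤ f)
    (n : ℕ) : HasSum (fun k : Fin n → β => ∏ i, f (k i)) (s ^ n) := by
  induction n with
  | zero => simp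
  | succ n ih =>
    set g := fun k : Fin n → β => ∏ i, f (k i)
    have hprod : HasSum (fun p : β × (Fin n → β) => f p.1 * g p.2) (s * s ^ n) :=
      hf.mul ih (hf.summable.mul_of_nonneg ih.summable hf0
        fun _ => Finset.prod_nonneg fun i _ => hf0 _)
    rw [← (Fin.consEquiv fun _ => β).symm.hasSum_iff] at hprod
    convert hprod using 2 with k
    · simp [g, Fin.prod_univ_succ, Fin.consEquiv, Fin.tail]
    · ring

lemma exp_neg_mul_sum_sq_sub_add_intCast_div_le {ι : Type*} [Fintype ι] {c t : ℝ} (hc : 0 ≤ c)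
    (ht : 0 ≤ t) {x y : ι → ℝ} (hxy : ∀ i, |x i - y i| ≤ 1 / 2) (k : ι → ℤ) :
    exp (-c * (∑ i, (x i - (y i + k i)) ^ 2) / t) ≤
      exp (-c * (∑ i, (x i - y i) ^ 2) / t) * ∏ i, latticeWeight (c / t) (k i) := by
  have hdiv (s : ℝ) : -c * s / t = -(c / t) * s := by ring
  simp only [hdiv, ← sub_sub, latticeWeight, ← exp_sum, ← exp_add, ← Finset.mul_sum, ← mul_add,
    ← Finset.sum_add_distrib]
  exact exp_le_exp.2 <| mul_le_mul_of_nonpos_left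
    (Finset.sum_le_sum fun i _ => sq_add_sq_sub_abs_le_sq_sub (hxy i) _)
    (neg_nonpos.2 (div_nonneg hc ht))

lemma rpow_neg_mul_pow_le_of_le_mul_one_add_sqrt {t s A : ℝ} (ht : 0 < t) (hs : 0 ≤ s)
    (hsA : s ≤ A * (1 + √t)) (n : ℕ) :
    t ^ (-(n : ℝ) / 2) * s ^ n ≤ (2 * A) ^ n * (t ^ (-(n : ℝ) / 2) + 1) := by
  have hA : 0 ≤ A := nonneg_of_mul_nonneg_left (hs.trans hsA) (by positivity)
  have hsqrt : √t ^ n = t ^ ((n : ℝ) / 2) := by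
    rw [sqrt_eq_rpow, ← rpow_natCast, ← rpow_mul ht.le]; ring_nf
  have hcancel : t ^ (-(n : ℝ) / 2) * t ^ ((n : ℝ) / 2) = 1 := by
    rw [← rpow_add ht, neg_div, neg_add_cancel, rpow_zero]
  have hbinom : (1 + √t) ^ n ≤ 2 ^ n * (1 + √t ^ n) :=
    calc (1 + √t) ^ n ≤ 2 ^ (n - 1) * (1 ^ n + √t ^ n) :=
          add_pow_le zero_le_one (sqrt_nonneg t) n
      _ ≤ 2 ^ n * (1 + √t ^ n) := by
        rw [one_pow]; gcongr; exacts [one_le_two, n.sub_le 1]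
  have hpow : s ^ n ≤ A ^ n * (2 ^ n * (1 + √t ^ n)) :=
    calc s ^ n ≤ (A * (1 + √t)) ^ n := by gcongr
      _ = A ^ n * (1 + √t) ^ n := mul_pow _ _ _
      _ ≤ A ^ n * (2 ^ n * (1 + √t ^ n)) := by gcongr
  calc t ^ (-(n : ℝ) / 2) * s ^ n ≤ t ^ (-(n : ℝ) / 2) * (A ^ n * (2 ^ n * (1 + √t ^ n))) := by
        gcongr
    _ = (2 * A) ^ n * (t ^ (-(n : ℝ) / 2) + 1) := by
        rw [hsqrt, mul_pow]; linear_combination (2 ^ n * A ^ n) * hcancel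

theorem statement14_general (d : ℕ) (c K : ℝ) (hc : 0 < c) (hK : 0 < K)
    (Γ : ℝ → (Fin d → ℝ) → (Fin d → ℝ) → ℝ)
    (hΓ : ∀ t : ℝ, 0 < t → ∀ x y : Fin d → ℝ,
      |Γ t x y| ≤ K * t ^ (-(d : ℝ) / 2) * Real.exp (-c * (∑ i, (x i - y i) ^ 2) / t)) :
    ∃ C > 0, ∀ t : ℝ, 0 < t → ∀ x y : Fin d → ℝ,
      x ∈ Set.Ico (0 : Fin d → ℝ) 1 → y ∈ Set.Ico (0 : Fin d → ℝ) 1 →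
      (∀ i, |x i - y i| ≤ 1 / 2) →
      (Summable fun k : Fin d → ℤ => |Γ t x (y + fun i => (k i : ℝ))|) →
      |∑' k : Fin d → ℤ, Γ t x (y + fun i => (k i : ℝ))| ≤
        C * K * (t ^ (-(d : ℝ) / 2) + 1) * Real.exp (-c * (∑ i, (x i - y i) ^ 2) / t) := by
  set A := 1 + 2 * exp 1 + exp 1 / √c
  refine ⟨(2 * A) ^ d, by positivity, fun t ht x y _ _ hxy hsum => ?_⟩
  set E := exp (-c * (∑ i, (x i - y i) ^ 2) / t)
  have hmajorant := (hasSum_fin_pi_prod (summable_latticeWeight (div_pos hc ht)).hasSum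
    (latticeWeight_nonneg _) d).mul_left (K * t ^ (-(d : ℝ) / 2) * E)
  have hterm (k : Fin d → ℤ) : |Γ t x (y + fun i => (k i : ℝ))| ≤
      K * t ^ (-(d : ℝ) / 2) * E * ∏ i, latticeWeight (c / t) (k i) := by
    rw [mul_assoc]
    refine (hΓ t ht x _).trans ?_
    gcongr
    exact exp_neg_mul_sum_sq_sub_add_intCast_div_le hc.le ht.le hxy k
  calc |∑' k : Fin d → ℤ, Γ t x (y + fun i => (k i : ℝ))|
      ≤ ∑' k : Fin d → ℤ, |Γ t x (y + fun i => (k i : ℝ))| :=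
        norm_tsum_le_tsum_norm (f := fun k : Fin d → ℤ => Γ t x (y + fun i => (k i : ℝ))) hsum
    _ ≤ K * t ^ (-(d : ℝ) / 2) * E * (∑' m, latticeWeight (c / t) m) ^ d :=
        (hsum.tsum_le_tsum hterm hmajorant.summable).trans_eq hmajorant.tsum_eq
    _ = K * E * (t ^ (-(d : ℝ) / 2) * (∑' m, latticeWeight (c / t) m) ^ d) := by ring
    _ ≤ K * E * ((2 * A) ^ d * (t ^ (-(d : ℝ) / 2) + 1)) :=
        mul_le_mul_of_nonneg_left (rpow_neg_mul_pow_le_of_le_mul_one_add_sqrt ht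
          (tsum_nonneg (latticeWeight_nonneg _)) (tsum_latticeWeight_div_le hc ht) d)
          (by positivity)
    _ = (2 * A) ^ d * K * (t ^ (-(d : ℝ) / 2) + 1) * E := by ring

/-- Periodization of Gaussian bounds: if the fundamental solution `Γ` satisfies
`|Γ(t;x,y)| ≤ K t^{-d/2} exp(-c|x-y|²/t)` on `ℝ^d`, then the periodized kernel
`Q(t;x,y) = Σ_{k ∈ ℤ^d} Γ(t;x,y+k)` (assumed absolutely convergent) satisfies
`|Q(t;x,y)| ≤ C K (t^{-d/2} + 1) exp(-c|x-y|²/t)` for `x, y ∈ [0,1)^d` with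
`x - y ∈ [-1/2,1/2]^d`, where `C` depends only on `c` and `d`. -/
theorem statement14 (d : ℕ) (hd : 0 < d) (c K : ℝ) (hc : 0 < c) (hK : 0 < K)
    (Γ : ℝ → (Fin d → ℝ) → (Fin d → ℝ) → ℝ)
    (hΓ : ∀ t : ℝ, 0 < t → ∀ x y : Fin d → ℝ,
      |Γ t x y| ≤ K * t ^ (-(d : ℝ) / 2) * Real.exp (-c * (∑ i, (x i - y i) ^ 2) / t)) :
    ∃ C > 0, ∀ t : ℝ, 0 < t → ∀ x y : Fin d → ℝ,
      x ∈ Set.Ico (0 : Fin d → ℝ) 1 → y ∈ Set.Ico (0 : Fin d → ℝ) 1 →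
      (∀ i, |x i - y i| ≤ 1 / 2) →
      (Summable fun k : Fin d → ℤ => |Γ t x (y + fun i => (k i : ℝ))|) →
      |∑' k : Fin d → ℤ, Γ t x (y + fun i => (k i : ℝ))| ≤
        C * K * (t ^ (-(d : ℝ) / 2) + 1) * Real.exp (-c * (∑ i, (x i - y i) ^ 2) / t) :=
  statement14_general d c K hc hK Γ hΓ
end

section
/- Let c > 0, d ≥ 1, K ∈ N. Define S(t, r) = Σ_{n ≥ -K} 2^{(d+2)n} e^{-c t 2^{2n}} (1 + 2^n r)^{-(d+3)} for t > 0 and r ≥ 0. Then there exists a constant C depending only on c, d, K such that S(t, r) ≤ C (√t + r)^{-(d+2)} for all t ∈ (0, 1] and r ∈ [0, 1]. -/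
/-!
Write `w = 2^(n-K)` and `p = d + 2`. The `n`-th term is at most `w^p`; multiplied by `√t^p` it is
also at most `A / (√t w)` with `A = 1 + (p+1)! / c^(p+1)`, thanks to the Gaussian factor, and
multiplied by `r^p` it is at most `1 / (r w)`, thanks to the factor `(1 + w r)^(-(p+1))`. A sequence
bounded by `min (u_n^p) (A / u_n)` along a dyadic sequence `u_n = x 2^n` sums to at most `2 + 2A`
whatever `x` is, because the terms with `u_n < 1` and those with `u_n ≥ 1` are both dominated by
geometric series. So `S √t^p` and `S r^p` are bounded, and `(√t + r)^p ≤ 2^(p-1) (√t^p + r^p)`.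
-/

open Finset Real
open scoped Nat

theorem summable_and_tsum_le_of_dyadic {f : ℕ → ℝ} {x A : ℝ} {p : ℕ} (hx : 0 < x) (hp : p ≠ 0)
    (hf : ∀ n, 0 ≤ f n) (hsmall : ∀ n, f n ≤ (x * 2 ^ n) ^ p)
    (hlarge : ∀ n, f n * (x * 2 ^ n) ≤ A) :
    Summable f ∧ ∑' n, f n ≤ 2 + 2 * A := by
  have hA : 0 ≤ A := (mul_nonneg (hf 0) (by positivity)).trans (hlarge 0)
  have hdecay : ∀ n, f n ≤ A / (x * 2 ^ n) := fun n => (le_div_iff₀ (by positivity)).2 (hlarge n)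
  have hsum : Summable f := by
    refine .of_nonneg_of_le hf (fun n => (hdecay n).trans_eq ?_)
      (summable_geometric_two.mul_left (A / x))
    rw [one_div, inv_pow, ← div_eq_mul_inv, div_mul_eq_div_div]
  refine ⟨hsum, ?_⟩
  have hex : ∃ N : ℕ, 1 ≤ x * 2 ^ N := by
    obtain ⟨N, hN⟩ := pow_unbounded_of_one_lt x⁻¹ one_lt_two
    exact ⟨N, by rw [inv_lt_iff_one_lt_mul₀ hx, mul_comm] at hN; exact hN.le⟩
  classical
  set N := Nat.find hex
  have hhead : ∑ n ∈ range N, f n ≤ 2 := by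
    have hlt : ∀ n < N, x * 2 ^ n < 1 := fun n hn => not_le.1 (Nat.find_min hex hn)
    calc ∑ n ∈ range N, f n ≤ ∑ n ∈ range N, x * 2 ^ n :=
          sum_le_sum fun n hn => (hsmall n).trans
            (pow_le_of_le_one (by positivity) (hlt n (mem_range.1 hn)).le hp)
      _ = x * (2 ^ N - 1) := by rw [← mul_sum, geom_sum_eq (by norm_num)]; norm_num
      _ ≤ 2 := by
          by_cases h0 : N = 0
          · simp [h0]
          obtain ⟨m, hm⟩ := Nat.exists_eq_add_one_of_ne_zero h0
          have := hlt m (by omega)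
          rw [hm, pow_succ]
          nlinarith
  have htail : ∑' k, f (k + N) ≤ 2 * A := by
    have hbound : ∀ k, f (k + N) ≤ A * (1 / 2) ^ k := by
      intro k
      have hgrow : 2 ^ k ≤ x * 2 ^ (k + N) := by
        rw [pow_add, mul_left_comm]
        exact le_mul_of_one_le_right (by positivity) (Nat.find_spec hex)
      calc f (k + N) ≤ A / (x * 2 ^ (k + N)) := hdecay _
        _ ≤ A / 2 ^ k := by gcongr
        _ = A * (1 / 2) ^ k := by rw [one_div, inv_pow, div_eq_mul_inv]
    calc ∑' k, f (k + N) ≤ ∑' k, A * (1 / 2 : ℝ) ^ k :=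
          ((summable_nat_add_iff N).2 hsum).tsum_le_tsum hbound
            (summable_geometric_two.mul_left A)
      _ = 2 * A := by rw [tsum_mul_left, tsum_geometric_two, mul_comm]
  rw [← hsum.sum_add_tsum_nat_add N]
  linarith

theorem pow_mul_exp_neg_mul_sq_le {c u : ℝ} (hc : 0 < c) (hu : 0 ≤ u) (m : ℕ) :
    u ^ m * exp (-(c * u ^ 2)) ≤ 1 + m ! / c ^ m := by
  have hpow : u ^ m ≤ 1 + u ^ (2 * m) := by
    rcases le_total u 1 with h | h
    · linarith [pow_le_one₀ hu h (n := m), pow_nonneg hu (2 * m)]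
    · linarith [pow_le_pow_right₀ h (by omega : m ≤ 2 * m)]
  have hgauss : u ^ (2 * m) * exp (-(c * u ^ 2)) ≤ m ! / c ^ m := by
    have h := pow_div_factorial_le_exp (x := c * u ^ 2) (by positivity) m
    rw [exp_neg, ← div_eq_mul_inv, div_le_div_iff₀ (by positivity) (by positivity)]
    rw [div_le_iff₀ (by positivity), mul_pow, ← pow_mul] at h
    linarith
  calc u ^ m * exp (-(c * u ^ 2)) ≤ (1 + u ^ (2 * m)) * exp (-(c * u ^ 2)) := by gcongr
    _ = exp (-(c * u ^ 2)) + u ^ (2 * m) * exp (-(c * u ^ 2)) := by ring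
    _ ≤ 1 + m ! / c ^ m := add_le_add (exp_le_one_iff.2 (by nlinarith [sq_nonneg u])) hgauss

noncomputable def dyadicTerm (c t r : ℝ) (p : ℕ) (w : ℝ) : ℝ :=
  w ^ p * exp (-c * t * w ^ 2) / (1 + w * r) ^ (p + 1)

section dyadicTerm

variable {c t r w : ℝ} {p : ℕ}

theorem dyadicTerm_nonneg (hw : 0 ≤ w) (hr : 0 ≤ r) : 0 ≤ dyadicTerm c t r p w := by
  unfold dyadicTerm; positivity

theorem dyadicTerm_le_pow (hct : 0 ≤ c * t) (hw : 0 ≤ w) (hr : 0 ≤ r) :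
    dyadicTerm c t r p w ≤ w ^ p := by
  have hexp : exp (-c * t * w ^ 2) ≤ 1 := exp_le_one_iff.2 (by nlinarith [sq_nonneg w])
  have hden : 1 ≤ (1 + w * r) ^ (p + 1) := one_le_pow₀ (by nlinarith)
  calc dyadicTerm c t r p w ≤ w ^ p * exp (-c * t * w ^ 2) := div_le_self (by positivity) hden
    _ ≤ w ^ p := mul_le_of_le_one_right (by positivity) hexp

theorem dyadicTerm_mul_sqrt_pow_mul_le (hc : 0 < c) (ht : 0 ≤ t) (hw : 0 ≤ w) (hr : 0 ≤ r) :
    dyadicTerm c t r p w * √t ^ p * (√t * w) ≤ 1 + (p + 1)! / c ^ (p + 1) := by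
  have hden : 1 ≤ (1 + w * r) ^ (p + 1) := one_le_pow₀ (by nlinarith)
  have hgauss := pow_mul_exp_neg_mul_sq_le hc (by positivity : 0 ≤ √t * w) (p + 1)
  rw [mul_pow √t w 2, sq_sqrt ht] at hgauss
  calc dyadicTerm c t r p w * √t ^ p * (√t * w)
      = (√t * w) ^ (p + 1) * exp (-(c * (t * w ^ 2))) / (1 + w * r) ^ (p + 1) := by
        unfold dyadicTerm; ring_nf
    _ ≤ (√t * w) ^ (p + 1) * exp (-(c * (t * w ^ 2))) := div_le_self (by positivity) hden
    _ ≤ 1 + (p + 1)! / c ^ (p + 1) := hgauss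

theorem dyadicTerm_mul_pow_mul_le_one (hct : 0 ≤ c * t) (hw : 0 ≤ w) (hr : 0 ≤ r) :
    dyadicTerm c t r p w * r ^ p * (r * w) ≤ 1 := by
  have hexp : exp (-c * t * w ^ 2) ≤ 1 := exp_le_one_iff.2 (by nlinarith [sq_nonneg w])
  have hratio : (r * w) ^ (p + 1) / (1 + w * r) ^ (p + 1) ≤ 1 :=
    div_le_one_of_le₀ (pow_le_pow_left₀ (by positivity) (by linarith [mul_comm r w]) _)
      (by positivity)
  calc dyadicTerm c t r p w * r ^ p * (r * w)
      = (r * w) ^ (p + 1) / (1 + w * r) ^ (p + 1) * exp (-c * t * w ^ 2) := by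
        unfold dyadicTerm; ring
    _ ≤ 1 := mul_le_one₀ hratio (exp_nonneg _) hexp

end dyadicTerm

theorem summable_and_tsum_dyadicTerm_mul_sqrt_pow_le {c t r : ℝ} {p : ℕ} (hc : 0 < c) (ht : 0 < t)
    (hr : 0 ≤ r) (hp : p ≠ 0) (K : ℕ) :
    Summable (fun n : ℕ => dyadicTerm c t r p (2 ^ n / 2 ^ K) * √t ^ p) ∧
      ∑' n : ℕ, dyadicTerm c t r p (2 ^ n / 2 ^ K) * √t ^ p
        ≤ 2 + 2 * (1 + (p + 1)! / c ^ (p + 1)) := by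
  have hscale : ∀ n : ℕ, √t / 2 ^ K * 2 ^ n = √t * (2 ^ n / 2 ^ K) := fun n => by ring
  refine summable_and_tsum_le_of_dyadic (x := √t / 2 ^ K) (by positivity) hp
    (fun n => mul_nonneg (dyadicTerm_nonneg (by positivity) hr) (by positivity))
    (fun n => ?_) (fun n => ?_)
  · rw [hscale, mul_pow, mul_comm]
    gcongr
    exact dyadicTerm_le_pow (by positivity) (by positivity) hr
  · rw [hscale]
    exact dyadicTerm_mul_sqrt_pow_mul_le hc ht.le (by positivity) hr

theorem tsum_dyadicTerm_mul_pow_le {c t r : ℝ} {p : ℕ} (hct : 0 ≤ c * t) (hr : 0 ≤ r)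
    (hp : p ≠ 0) (K : ℕ) :
    (∑' n : ℕ, dyadicTerm c t r p (2 ^ n / 2 ^ K)) * r ^ p ≤ 4 := by
  rcases hr.eq_or_lt with rfl | hr
  · simp [hp]
  have hscale : ∀ n : ℕ, r / 2 ^ K * 2 ^ n = r * (2 ^ n / 2 ^ K) := fun n => by ring
  have h := summable_and_tsum_le_of_dyadic (f := fun n => dyadicTerm c t r p (2 ^ n / 2 ^ K) * r ^ p)
    (x := r / 2 ^ K) (A := 1) (by positivity) hp
    (fun n => mul_nonneg (dyadicTerm_nonneg (by positivity) hr.le) (by positivity))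
    (fun n => ?_) (fun n => ?_)
  · rw [← tsum_mul_right]; linarith [h.2]
  · rw [hscale, mul_pow, mul_comm]
    gcongr
    exact dyadicTerm_le_pow hct (by positivity) hr.le
  · rw [hscale]
    exact dyadicTerm_mul_pow_mul_le_one hct (by positivity) hr.le

theorem le_mul_add_rpow_neg_of_mul_pow_le {S s r a b : ℝ} {p : ℕ} (hS : 0 ≤ S) (hs : 0 ≤ s)
    (hr : 0 ≤ r) (hsr : 0 < s + r) (ha : S * s ^ p ≤ a) (hb : S * r ^ p ≤ b) :
    S ≤ 2 ^ p * (a + b) * (s + r) ^ (-(p : ℝ)) := by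
  rw [rpow_neg hsr.le, rpow_natCast, ← div_eq_mul_inv, le_div_iff₀ (by positivity)]
  have h2 : (2 : ℝ) ^ (p - 1) ≤ 2 ^ p := pow_le_pow_right₀ one_le_two (Nat.sub_le p 1)
  calc S * (s + r) ^ p ≤ S * (2 ^ (p - 1) * (s ^ p + r ^ p)) := by gcongr; exact add_pow_le hs hr p
    _ ≤ S * (2 ^ p * (s ^ p + r ^ p)) := by gcongr
    _ = 2 ^ p * (S * s ^ p + S * r ^ p) := by ring
    _ ≤ 2 ^ p * (a + b) := by gcongr

theorem rpow_summand_eq_dyadicTerm (c t : ℝ) {r : ℝ} (hr : 0 ≤ r) (d K : ℕ) :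
    (fun n : ℕ =>
        (2 : ℝ) ^ (((d : ℝ) + 2) * ((n : ℝ) - (K : ℝ))) *
          Real.exp (-c * t * (2 : ℝ) ^ (2 * ((n : ℝ) - (K : ℝ)))) *
          (1 + (2 : ℝ) ^ ((n : ℝ) - (K : ℝ)) * r) ^ (-((d : ℝ) + 3))) =
      fun n : ℕ => dyadicTerm c t r (d + 2) (2 ^ n / 2 ^ K) := by
  funext n
  have hw : (2 : ℝ) ^ ((n : ℝ) - K) = 2 ^ n / 2 ^ K := by
    rw [rpow_sub two_pos, rpow_natCast, rpow_natCast]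
  have hpow : ∀ m : ℕ, (2 : ℝ) ^ ((m : ℝ) * ((n : ℝ) - K)) = (2 ^ n / 2 ^ K) ^ m := fun m => by
    rw [mul_comm, rpow_mul zero_le_two, hw, rpow_natCast]
  have hd2 : (d : ℝ) + 2 = ((d + 2 : ℕ) : ℝ) := by push_cast; ring
  have hd3 : -((d : ℝ) + 3) = -((d + 2 + 1 : ℕ) : ℝ) := by push_cast; ring
  have hsq : (2 : ℝ) ^ (2 * ((n : ℝ) - K)) = (2 ^ n / 2 ^ K) ^ 2 := by
    rw [← hpow 2]; norm_num
  rw [hd2, hpow, hsq, hw, hd3, rpow_neg (by positivity), rpow_natCast]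
  rfl

theorem statement16_general (c : ℝ) (hc : 0 < c) (d : ℕ) (K : ℕ) :
    ∃ C > 0, ∀ t ∈ Set.Ioc (0 : ℝ) 1, ∀ r ∈ Set.Icc (0 : ℝ) 1,
      Summable (fun n : ℕ =>
        (2 : ℝ) ^ (((d : ℝ) + 2) * ((n : ℝ) - (K : ℝ))) *
          Real.exp (-c * t * (2 : ℝ) ^ (2 * ((n : ℝ) - (K : ℝ)))) *
          (1 + (2 : ℝ) ^ ((n : ℝ) - (K : ℝ)) * r) ^ (-((d : ℝ) + 3))) ∧
      (∑' n : ℕ,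
        (2 : ℝ) ^ (((d : ℝ) + 2) * ((n : ℝ) - (K : ℝ))) *
          Real.exp (-c * t * (2 : ℝ) ^ (2 * ((n : ℝ) - (K : ℝ)))) *
          (1 + (2 : ℝ) ^ ((n : ℝ) - (K : ℝ)) * r) ^ (-((d : ℝ) + 3)))
        ≤ C * (Real.sqrt t + r) ^ (-((d : ℝ) + 2)) := by
  set A : ℝ := 2 + 2 * (1 + (d + 2 + 1)! / c ^ (d + 2 + 1))
  refine ⟨2 ^ (d + 2) * (A + 4), by positivity, ?_⟩
  rintro t ⟨ht, -⟩ r ⟨hr, -⟩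
  have hp : d + 2 ≠ 0 := by omega
  obtain ⟨hsumm, hsqrt⟩ := summable_and_tsum_dyadicTerm_mul_sqrt_pow_le hc ht hr hp K
  rw [tsum_mul_right] at hsqrt
  have hdist := tsum_dyadicTerm_mul_pow_le (mul_pos hc ht).le hr hp K
  have hd2 : (d : ℝ) + 2 = ((d + 2 : ℕ) : ℝ) := by push_cast; ring
  rw [rpow_summand_eq_dyadicTerm c t hr, hd2]
  exact ⟨(summable_mul_right_iff (by positivity)).1 hsumm,
    le_mul_add_rpow_neg_of_mul_pow_le (tsum_nonneg fun n => dyadicTerm_nonneg (by positivity) hr)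
      (sqrt_nonneg t) hr (by positivity) hsqrt hdist⟩

/-- Dyadic summation bound: with `S(t,r) = Σ_{n ≥ -K} 2^{(d+2)n} e^{-ct2^{2n}} (1+2^n r)^{-(d+3)}`
(the sum over `n ≥ -K` being reindexed by `n ∈ ℕ` via `n - K`), there is `C` depending only on
`c, d, K` with `S(t,r) ≤ C(√t + r)^{-(d+2)}` for all `t ∈ (0,1]` and `r ∈ [0,1]`. -/
theorem statement16 (c : ℝ) (hc : 0 < c) (d : ℕ) (hd : 0 < d) (K : ℕ) :
    ∃ C > 0, ∀ t ∈ Set.Ioc (0 : ℝ) 1, ∀ r ∈ Set.Icc (0 : ℝ) 1,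
      Summable (fun n : ℕ =>
        (2 : ℝ) ^ (((d : ℝ) + 2) * ((n : ℝ) - (K : ℝ))) *
          Real.exp (-c * t * (2 : ℝ) ^ (2 * ((n : ℝ) - (K : ℝ)))) *
          (1 + (2 : ℝ) ^ ((n : ℝ) - (K : ℝ)) * r) ^ (-((d : ℝ) + 3))) ∧
      (∑' n : ℕ,
        (2 : ℝ) ^ (((d : ℝ) + 2) * ((n : ℝ) - (K : ℝ))) *
          Real.exp (-c * t * (2 : ℝ) ^ (2 * ((n : ℝ) - (K : ℝ)))) *
          (1 + (2 : ℝ) ^ ((n : ℝ) - (K : ℝ)) * r) ^ (-((d : ℝ) + 3)))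
        ≤ C * (Real.sqrt t + r) ^ (-((d : ℝ) + 2)) :=
  statement16_general c hc d K
end
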